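/- For integers m ≥ 2 and 1 ≤ l ≤ m, χ(f*_m, l) = χ(f*_m, m), where χ(f, l) = max({j·f(j)-f(j+1) : 1 ≤ j ≤ l-1} ∪ {(l-1)·f(l)}). -/

import Mathlib

/-- The optimal distribution rule `f*_k(j)` for covering games of cardinality `k`. -/
noncomputable def fstar (k j : ℕ) : ℝ :=
  (Nat.factorial (j - 1) : ℝ) *
    (1 / (((k - 1) * Nat.factorial (k - 1) : ℕ) : ℝ) +
      ∑ i ∈ Finset.Icc j (k - 1), (1 : ℝ) / (Nat.factorial i : ℝ)) /
  (1 / (((k - 1) * Nat.factorial (k - 1) : ℕ) : ℝ) +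
      ∑ i ∈ Finset.Icc 1 (k - 1), (1 : ℝ) / (Nat.factorial i : ℝ))

/-- `χ(f,l)`: the maximum of `{j·f(j) - f(j+1) : 1 ≤ j ≤ l-1} ∪ {(l-1)·f(l)}`. -/
noncomputable def chi (f : ℕ → ℝ) (l : ℕ) : ℝ :=
  (Finset.Icc 1 (l - 1)).fold max (((l - 1 : ℕ) : ℝ) * f l)
    (fun j : ℕ => (j : ℝ) * f j - f (j + 1))

/-! Every term `j f(j) - f(j+1)` (`1 ≤ j < m`) of `χ(f*_m, ·)` equals `c = (m-1) f*_m(m) ≥ 0`, since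
the tails `∑_{i ≥ j} 1/i!` drop by exactly `1/j!`. Hence `χ(f*_m, l) = c` once the last term
`(l-1) f*_m(l)` is at most `c`, which follows by downward induction from `l = m`: `l f(l) = c + f(l+1)`,
and `l f(l+1) ≤ c` with `c ≥ 0` gives `(l-1) f(l+1) ≤ c`. -/

open Finset

theorem sub_one_mul_le_of_recursion {f : ℕ → ℝ} {c : ℝ} {m : ℕ} (hc : 0 ≤ c)
    (hrec : ∀ j, 1 ≤ j → j < m → (j : ℝ) * f j - f (j + 1) = c)
    (hlast : ((m - 1 : ℕ) : ℝ) * f m ≤ c) {l : ℕ} (hl : 1 ≤ l) (hlm : l ≤ m) :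
    ((l - 1 : ℕ) : ℝ) * f l ≤ c := by
  induction hlm using Nat.decreasingInduction with
  | self => exact hlast
  | of_succ l hlm ih =>
    have hnext : (l : ℝ) * f (l + 1) ≤ c := by simpa using ih (by omega)
    have hstep := hrec l hl hlm
    have hl' : (1 : ℝ) ≤ l := by exact_mod_cast hl
    have hfar : ((l : ℝ) - 1) * f (l + 1) ≤ c := by
      rcases le_total 0 (f (l + 1)) with hpos | hneg <;> nlinarith
    rw [Nat.cast_sub hl, Nat.cast_one]
    nlinarith

theorem chi_eq_of_recursion {f : ℕ → ℝ} {c : ℝ} {l : ℕ} (hl : 2 ≤ l)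
    (hrec : ∀ j, 1 ≤ j → j < l → (j : ℝ) * f j - f (j + 1) = c)
    (hlast : ((l - 1 : ℕ) : ℝ) * f l ≤ c) : chi f l = c := by
  have hmem : ∀ {j}, j ∈ Icc 1 (l - 1) → 1 ≤ j ∧ j < l := fun hj => by
    rw [mem_Icc] at hj; omega
  refine le_antisymm
    ((fold_max_le _).2 ⟨hlast, fun j hj => (hrec j (hmem hj).1 (hmem hj).2).le⟩) ?_
  exact (le_fold_max _).2 (.inr ⟨1, mem_Icc.2 ⟨le_rfl, by omega⟩, (hrec 1 le_rfl (by omega)).ge⟩)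

noncomputable def fstarTail (k j : ℕ) : ℝ :=
  1 / (((k - 1) * Nat.factorial (k - 1) : ℕ) : ℝ) +
    ∑ i ∈ Icc j (k - 1), (1 : ℝ) / (Nat.factorial i : ℝ)

theorem fstar_eq_fstarTail (k j : ℕ) :
    fstar k j = (j - 1).factorial * fstarTail k j / fstarTail k 1 := rfl

theorem fstarTail_eq_add {k j : ℕ} (hj : j ≤ k - 1) :
    fstarTail k j = 1 / (j.factorial : ℝ) + fstarTail k (j + 1) := by
  rw [fstarTail, fstarTail, ← insert_Icc_add_one_left_eq_Icc hj, sum_insert (by simp)]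
  ring

theorem sub_one_mul_factorial_mul_fstarTail_self {k : ℕ} (hk : 2 ≤ k) :
    ((k - 1 : ℕ) : ℝ) * (k - 1).factorial * fstarTail k k = 1 := by
  have hpos : (0 : ℝ) < (((k - 1) * (k - 1).factorial : ℕ) : ℝ) := by
    have := (k - 1).factorial_pos
    exact_mod_cast Nat.mul_pos (by omega) this
  rw [fstarTail, Icc_eq_empty (by omega), sum_empty, add_zero, ← Nat.cast_mul,
    mul_one_div_cancel hpos.ne']

theorem fstar_recursion {k j : ℕ} (hj : 1 ≤ j) (hjk : j < k) :
    j * fstar k j - fstar k (j + 1) = ((k - 1 : ℕ) : ℝ) * fstar k k := by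
  have hfact : (j.factorial : ℝ) = j * (j - 1).factorial := by
    rw [← Nat.cast_mul, Nat.mul_factorial_pred (by omega)]
  have hjfact : (j.factorial : ℝ) ≠ 0 := by positivity
  calc (j : ℝ) * fstar k j - fstar k (j + 1)
      = j.factorial * (fstarTail k j - fstarTail k (j + 1)) / fstarTail k 1 := by
        simp only [fstar_eq_fstarTail, Nat.add_sub_cancel, hfact]; ring
    _ = 1 / fstarTail k 1 := by
        rw [fstarTail_eq_add (by omega), add_sub_cancel_right, mul_one_div_cancel hjfact]
    _ = ((k - 1 : ℕ) : ℝ) * fstar k k := by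
        rw [fstar_eq_fstarTail, ← sub_one_mul_factorial_mul_fstarTail_self (by omega : 2 ≤ k)]
        ring

theorem fstar_nonneg (k j : ℕ) : 0 ≤ fstar k j := by
  unfold fstar; positivity

theorem chi_fstar {k l : ℕ} (hl : 2 ≤ l) (hlk : l ≤ k) :
    chi (fstar k) l = ((k - 1 : ℕ) : ℝ) * fstar k k := by
  have hc : 0 ≤ ((k - 1 : ℕ) : ℝ) * fstar k k :=
    mul_nonneg (Nat.cast_nonneg _) (fstar_nonneg k k)
  refine chi_eq_of_recursion hl (fun j hj hjl => fstar_recursion hj (by omega)) ?_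
  exact sub_one_mul_le_of_recursion hc (fun j hj hjk => fstar_recursion hj hjk) le_rfl
    (by omega) hlk

theorem stmt_18_general (m l : ℕ) (hl : 2 ≤ l) (hlm : l ≤ m) :
    chi (fstar m) l = chi (fstar m) m := by
  rw [chi_fstar hl hlm, chi_fstar (hl.trans hlm) le_rfl]

theorem stmt_18 (m l : ℕ) (hm : 2 ≤ m) (hl : 2 ≤ l) (hlm : l ≤ m) :
    chi (fstar m) l = chi (fstar m) m :=
  stmt_18_general m l hl hlm
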